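/- Suppose $\mathcal{R} = \{r_1,\dots,r_k\}$ fails to be a set of $\theta$-optimal Ritz values of an upper Hessenberg matrix $H$, i.e., $\|e_n^*(H-r_1)\cdots(H-r_k)\| > \theta^k \psi_k^k(H)$, where $\psi_k(H) = \min_p \|e_n^* p(H)\|^{1/k}$ over monic degree-$k$ polynomials $p$. Then with $p(z) = \prod_i (z - r_i)$ and $\chi_k$ the characteristic polynomial of the bottom-right $k\times k$ corner of $H$, and $Z_H$ the spectral random variable of $H$: $\mathbb{E}[|p(Z_H)|^2] \ge \frac{\theta^{2k}}{\kappa_V(H)^4}\, \mathbb{E}[|\chi_k(Z_H)|^2]$. -/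

import Mathlib

open Polynomial Matrix

/-- The spectral (ℓ² operator) norm of a complex matrix. -/
noncomputable def specNorm {m : Type*} [Fintype m] [DecidableEq m] (A : Matrix m m ℂ) : ℝ :=
  ‖Matrix.toEuclideanCLM (𝕜 := ℂ) A‖

/-- The Euclidean norm of the last row of a matrix, i.e. `‖eₙ* A‖`. -/
noncomputable def rowNorm {n : ℕ} (A : Matrix (Fin (n + 1)) (Fin (n + 1)) ℂ) : ℝ :=
  Real.sqrt (∑ j, ‖A (Fin.last n) j‖ ^ 2)

/-- The probability that the spectral random variable `Z_H` equals the `i`-th eigenvalue: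
`|eₙ* V eᵢ|² / ‖eₙ* V‖²`. -/
noncomputable def specWeight {n : ℕ} (V : Matrix (Fin (n + 1)) (Fin (n + 1)) ℂ)
    (i : Fin (n + 1)) : ℝ :=
  ‖V (Fin.last n) i‖ ^ 2 / ∑ j, ‖V (Fin.last n) j‖ ^ 2

/-- Embedding of the bottom-right `k × k` corner indices. -/
def cornerEmb {n : ℕ} (k : ℕ) (hk : k ≤ n) (j : Fin k) : Fin (n + 1) :=
  ⟨n + 1 - k + ↑j, by have := j.isLt; omega⟩

open scoped Matrix.Norms.L2Operator

/-!
Upper Hessenberg structure gives the variational formula: for monic `q` of degree `k`, the last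
row of `q(H) - χ_k(H)` vanishes off the bottom-right `k × k` corner, while that of `χ_k(H)`
vanishes on it by Cayley–Hamilton for the corner, so `χ_k` minimises `‖eₙ* q(H)‖` and
`ψ_k(H)^k = ‖eₙ* χ_k(H)‖`.

Writing `H = V D V⁻¹`, we have `eₙ* q(H) V = eₙ* V q(D)`, whose norm is
`‖eₙ* V‖ E[|q(Z_H)|²]^{1/2}`; with `‖V⁻¹‖⁻¹ ≤ ‖eₙ* V‖ ≤ ‖V‖` this is the approximate functional
calculus `‖eₙ* q(H)‖ / κ ≤ E[|q(Z_H)|²]^{1/2} ≤ κ ‖eₙ* q(H)‖`. Applying it to `χ_k` and to `p` on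
either side of the failure inequality gives `θ^k E[|χ_k(Z_H)|²]^{1/2} ≤ κ² E[|p(Z_H)|²]^{1/2}`.
-/

def IsUpperHessenberg {R : Type*} [Zero R] {m : ℕ} (H : Matrix (Fin m) (Fin m) R) : Prop :=
  ∀ i j : Fin m, (j : ℕ) + 1 < (i : ℕ) → H i j = 0

section Hessenberg

variable {R : Type*}

theorem IsUpperHessenberg.pow_apply_eq_zero [Semiring R] {m : ℕ}
    {H : Matrix (Fin m) (Fin m) R} (hH : IsUpperHessenberg H) (j : ℕ) {i l : Fin m}
    (h : (l : ℕ) + j < i) : (H ^ j) i l = 0 := by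
  induction j generalizing l with
  | zero => exact Matrix.one_apply_ne (by rintro rfl; omega)
  | succ j ih =>
    rw [pow_succ, Matrix.mul_apply]
    refine Finset.sum_eq_zero fun m _ => ?_
    by_cases hm : (m : ℕ) + j < i
    · rw [ih hm, zero_mul]
    · rw [hH m l (by omega), mul_zero]

theorem IsUpperHessenberg.aeval_last_apply_eq_zero [CommSemiring R] {n k : ℕ}
    {H : Matrix (Fin (n + 1)) (Fin (n + 1)) R} (hH : IsUpperHessenberg H) {q : R[X]}
    (hq : q.natDegree < k) {i : Fin (n + 1)} (hi : (i : ℕ) + k ≤ n) :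
    aeval H q (Fin.last n) i = 0 := by
  rw [aeval_eq_sum_range, Matrix.sum_apply]
  refine Finset.sum_eq_zero fun j hj => ?_
  rw [Matrix.smul_apply, hH.pow_apply_eq_zero j (by simp at hj ⊢; omega), smul_zero]

variable {n k : ℕ} (hkn : k ≤ n)

theorem cornerEmb_injective : Function.Injective (cornerEmb k hkn) := fun a b hab => by
  have := congrArg Fin.val hab
  simp only [cornerEmb] at this
  exact Fin.ext (by omega)

theorem mem_range_cornerEmb {i : Fin (n + 1)} :
    i ∈ Set.range (cornerEmb k hkn) ↔ n + 1 - k ≤ (i : ℕ) := by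
  constructor
  · rintro ⟨c, rfl⟩
    simp [cornerEmb]
  · intro hi
    exact ⟨⟨i - (n + 1 - k), by omega⟩, Fin.ext (by simp [cornerEmb]; omega)⟩

theorem cornerEmb_last (hk1 : 1 ≤ k) : cornerEmb k hkn ⟨k - 1, by omega⟩ = Fin.last n :=
  Fin.ext (by simp [cornerEmb]; omega)

theorem IsUpperHessenberg.pow_last_cornerEmb [Semiring R]
    {H : Matrix (Fin (n + 1)) (Fin (n + 1)) R} (hH : IsUpperHessenberg H) (hk1 : 1 ≤ k) {j : ℕ}
    (hj : j ≤ k) (c : Fin k) :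
    (H ^ j) (Fin.last n) (cornerEmb k hkn c) =
      (H.submatrix (cornerEmb k hkn) (cornerEmb k hkn) ^ j) ⟨k - 1, by omega⟩ c := by
  induction j generalizing c with
  | zero =>
    rw [pow_zero, pow_zero, ← cornerEmb_last hkn hk1, ← Matrix.submatrix_apply (A := 1),
      Matrix.submatrix_one _ (cornerEmb_injective hkn)]
  | succ j ih =>
    rw [pow_succ, pow_succ, Matrix.mul_apply, Matrix.mul_apply]
    refine (Fintype.sum_of_injective _ (cornerEmb_injective hkn) _ _ (fun i hi => ?_)
      (fun c' => by rw [ih (by omega), Matrix.submatrix_apply])).symm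
    rw [mem_range_cornerEmb] at hi
    rw [hH.pow_apply_eq_zero j (by simp; omega), zero_mul]

theorem IsUpperHessenberg.aeval_last_cornerEmb [CommSemiring R]
    {H : Matrix (Fin (n + 1)) (Fin (n + 1)) R} (hH : IsUpperHessenberg H) (hk1 : 1 ≤ k)
    {q : R[X]} (hq : q.natDegree ≤ k) (c : Fin k) :
    aeval H q (Fin.last n) (cornerEmb k hkn c) =
      aeval (H.submatrix (cornerEmb k hkn) (cornerEmb k hkn)) q ⟨k - 1, by omega⟩ c := by
  simp only [aeval_eq_sum_range, Matrix.sum_apply, Matrix.smul_apply]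
  refine Finset.sum_congr rfl fun j hj => ?_
  rw [hH.pow_last_cornerEmb hkn hk1 (by simp at hj; omega)]

end Hessenberg

theorem Matrix.one_le_l2_opNorm_mul_l2_opNorm_inv {𝕜 m : Type*} [RCLike 𝕜] [Fintype m]
    [DecidableEq m] [Nonempty m] {V : Matrix m m 𝕜} (hV : IsUnit V) : 1 ≤ ‖V‖ * ‖V⁻¹‖ := by
  simpa [Matrix.mul_nonsing_inv V ((Matrix.isUnit_iff_isUnit_det V).mp hV)] using
    Matrix.l2_opNorm_mul V V⁻¹

section RowNorm

variable {n : ℕ}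

theorem rowNorm_nonneg (A : Matrix (Fin (n + 1)) (Fin (n + 1)) ℂ) : 0 ≤ rowNorm A :=
  Real.sqrt_nonneg _

theorem rowNorm_eq_norm_star (A : Matrix (Fin (n + 1)) (Fin (n + 1)) ℂ) :
    rowNorm A = ‖(EuclideanSpace.equiv (Fin (n + 1)) ℂ).symm (star (A (Fin.last n)))‖ := by
  simp [rowNorm, EuclideanSpace.norm_eq]

theorem rowNorm_one : rowNorm (1 : Matrix (Fin (n + 1)) (Fin (n + 1)) ℂ) = 1 := by
  simp [rowNorm, Matrix.one_apply, apply_ite (fun x : ℂ => ‖x‖ ^ 2)]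

theorem rowNorm_mul_le (A B : Matrix (Fin (n + 1)) (Fin (n + 1)) ℂ) :
    rowNorm (A * B) ≤ rowNorm A * ‖B‖ := by
  have hrow : star ((A * B) (Fin.last n)) = Bᴴ *ᵥ star (A (Fin.last n)) :=
    Matrix.star_vecMul B _
  rw [rowNorm_eq_norm_star, hrow, rowNorm_eq_norm_star, mul_comm,
    ← Matrix.l2_opNorm_conjTranspose B]
  exact Matrix.l2_opNorm_mulVec _ _

theorem rowNorm_le_norm (V : Matrix (Fin (n + 1)) (Fin (n + 1)) ℂ) : rowNorm V ≤ ‖V‖ := by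
  simpa [rowNorm_one] using rowNorm_mul_le 1 V

theorem one_le_rowNorm_mul_norm_inv {V : Matrix (Fin (n + 1)) (Fin (n + 1)) ℂ} (hV : IsUnit V) :
    1 ≤ rowNorm V * ‖V⁻¹‖ := by
  simpa [Matrix.mul_nonsing_inv V ((Matrix.isUnit_iff_isUnit_det V).mp hV), rowNorm_one] using
    rowNorm_mul_le V V⁻¹

theorem rowNorm_pos {V : Matrix (Fin (n + 1)) (Fin (n + 1)) ℂ} (hV : IsUnit V) :
    0 < rowNorm V :=
  (rowNorm_nonneg V).lt_of_ne fun h => by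
    have := one_le_rowNorm_mul_norm_inv hV
    rw [← h, zero_mul] at this
    linarith

theorem rowNorm_mul_diagonal (V : Matrix (Fin (n + 1)) (Fin (n + 1)) ℂ) (f : Fin (n + 1) → ℂ) :
    rowNorm (V * diagonal f) = Real.sqrt (∑ i, ‖V (Fin.last n) i‖ ^ 2 * ‖f i‖ ^ 2) := by
  simp [rowNorm, Matrix.mul_diagonal, mul_pow]

end RowNorm

section Potential

variable {n k : ℕ} (hkn : k ≤ n) {H : Matrix (Fin (n + 1)) (Fin (n + 1)) ℂ}

-- `ψ_k(H)`
noncomputable def potential (H : Matrix (Fin (n + 1)) (Fin (n + 1)) ℂ) (k : ℕ) : ℝ :=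
  sInf {x | ∃ q : ℂ[X], q.Monic ∧ q.natDegree = k ∧ x = rowNorm (aeval H q) ^ (1 / (k : ℝ))}

theorem IsUpperHessenberg.rowNorm_aeval_charpoly_le (hH : IsUpperHessenberg H) (hk1 : 1 ≤ k)
    {q : ℂ[X]} (hq : q.Monic) (hqk : q.natDegree = k) :
    rowNorm (aeval H (H.submatrix (cornerEmb k hkn) (cornerEmb k hkn)).charpoly) ≤
      rowNorm (aeval H q) := by
  set χ := (H.submatrix (cornerEmb k hkn) (cornerEmb k hkn)).charpoly
  have hχk : χ.natDegree = k := by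
    rw [Matrix.charpoly_natDegree_eq_dim, Fintype.card_fin]
  refine Real.sqrt_le_sqrt (Finset.sum_le_sum fun j _ => ?_)
  by_cases hj : j ∈ Set.range (cornerEmb k hkn)
  · obtain ⟨c, rfl⟩ := hj
    rw [hH.aeval_last_cornerEmb hkn hk1 hχk.le, Matrix.aeval_self_charpoly, Matrix.zero_apply,
      norm_zero, zero_pow two_ne_zero]
    positivity
  · have hdeg : (q - χ).natDegree < k :=
      IsMonicOfDegree.natDegree_sub_lt (by omega) ⟨hqk, hq⟩ ⟨hχk, Matrix.charpoly_monic _⟩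
    have hrow := hH.aeval_last_apply_eq_zero hdeg (i := j)
      (by rw [mem_range_cornerEmb] at hj; omega)
    rw [map_sub, Matrix.sub_apply, sub_eq_zero] at hrow
    rw [hrow]

theorem IsUpperHessenberg.potential_pow (hH : IsUpperHessenberg H) (hk1 : 1 ≤ k) :
    potential H k ^ k =
      rowNorm (aeval H (H.submatrix (cornerEmb k hkn) (cornerEmb k hkn)).charpoly) := by
  set χ := (H.submatrix (cornerEmb k hkn) (cornerEmb k hkn)).charpoly
  have hleast : IsLeast {x | ∃ q : ℂ[X], q.Monic ∧ q.natDegree = k ∧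
      x = rowNorm (aeval H q) ^ (1 / (k : ℝ))} (rowNorm (aeval H χ) ^ (1 / (k : ℝ))) := by
    refine ⟨⟨χ, Matrix.charpoly_monic _, ?_, rfl⟩, ?_⟩
    · rw [Matrix.charpoly_natDegree_eq_dim, Fintype.card_fin]
    · rintro x ⟨q, hq, hqk, rfl⟩
      exact Real.rpow_le_rpow (rowNorm_nonneg _) (hH.rowNorm_aeval_charpoly_le hkn hk1 hq hqk)
        (by positivity)
  rw [potential, hleast.csInf_eq, one_div,
    Real.rpow_inv_natCast_pow (rowNorm_nonneg _) (by omega)]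

end Potential

section SpectralVariable

variable {n : ℕ}

theorem aeval_conj_diagonal {V : Matrix (Fin (n + 1)) (Fin (n + 1)) ℂ} (hV : IsUnit V)
    (d : Fin (n + 1) → ℂ) (q : ℂ[X]) :
    aeval (V * diagonal d * V⁻¹) q = V * diagonal (fun i => q.eval (d i)) * V⁻¹ := by
  have hconj := aeval_algHom_apply
    (MulSemiringAction.toAlgHom ℂ _ (ConjAct.toConjAct hV.unit)) (diagonal d) q
  have hdiag := aeval_algHom_apply (diagonalAlgHom ℂ) d q
  simp_all [ConjAct.units_smul_def, Matrix.coe_units_inv, aeval_pi_apply]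

-- `E[|q(Z_H)|²]` when `H = V (diagonal d) V⁻¹`
noncomputable def spectralMoment (V : Matrix (Fin (n + 1)) (Fin (n + 1)) ℂ)
    (d : Fin (n + 1) → ℂ) (q : ℂ[X]) : ℝ :=
  ∑ i, specWeight V i * ‖q.eval (d i)‖ ^ 2

theorem spectralMoment_nonneg (V : Matrix (Fin (n + 1)) (Fin (n + 1)) ℂ) (d : Fin (n + 1) → ℂ)
    (q : ℂ[X]) : 0 ≤ spectralMoment V d q := by
  unfold spectralMoment specWeight
  positivity

theorem sqrt_spectralMoment (V : Matrix (Fin (n + 1)) (Fin (n + 1)) ℂ) (d : Fin (n + 1) → ℂ)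
    (q : ℂ[X]) :
    Real.sqrt (spectralMoment V d q) =
      rowNorm (V * diagonal (fun i => q.eval (d i))) / rowNorm V := by
  rw [rowNorm_mul_diagonal, rowNorm, ← Real.sqrt_div' _ (by positivity), spectralMoment,
    Finset.sum_div]
  simp only [specWeight, div_mul_eq_mul_div]

variable {H V : Matrix (Fin (n + 1)) (Fin (n + 1)) ℂ} {d : Fin (n + 1) → ℂ}

theorem sqrt_spectralMoment_le (hV : IsUnit V) (hH : H = V * diagonal d * V⁻¹) (q : ℂ[X]) :
    Real.sqrt (spectralMoment V d q) ≤ ‖V‖ * ‖V⁻¹‖ * rowNorm (aeval H q) := by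
  have hM : V * diagonal (fun i => q.eval (d i)) = aeval H q * V := by
    rw [hH, aeval_conj_diagonal hV]
    exact (Matrix.nonsing_inv_mul_cancel_right V _ ((Matrix.isUnit_iff_isUnit_det V).mp hV)).symm
  rw [sqrt_spectralMoment, div_le_iff₀ (rowNorm_pos hV), hM]
  calc rowNorm (aeval H q * V) ≤ rowNorm (aeval H q) * ‖V‖ := rowNorm_mul_le _ _
    _ ≤ rowNorm (aeval H q) * ‖V‖ * (rowNorm V * ‖V⁻¹‖) :=
      le_mul_of_one_le_right (mul_nonneg (rowNorm_nonneg _) (norm_nonneg _))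
        (one_le_rowNorm_mul_norm_inv hV)
    _ = ‖V‖ * ‖V⁻¹‖ * rowNorm (aeval H q) * rowNorm V := by ring

theorem rowNorm_aeval_le (hV : IsUnit V) (hH : H = V * diagonal d * V⁻¹) (q : ℂ[X]) :
    rowNorm (aeval H q) ≤ ‖V‖ * ‖V⁻¹‖ * Real.sqrt (spectralMoment V d q) := by
  set M := V * diagonal (fun i => q.eval (d i))
  have hV_pos := rowNorm_pos hV
  calc rowNorm (aeval H q) = rowNorm (M * V⁻¹) := by rw [hH, aeval_conj_diagonal hV]
    _ ≤ rowNorm M * ‖V⁻¹‖ := rowNorm_mul_le _ _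
    _ = rowNorm M / rowNorm V * rowNorm V * ‖V⁻¹‖ := by field_simp
    _ ≤ rowNorm M / rowNorm V * ‖V‖ * ‖V⁻¹‖ := by
      gcongr
      · exact div_nonneg (rowNorm_nonneg _) hV_pos.le
      · exact rowNorm_le_norm V
    _ = ‖V‖ * ‖V⁻¹‖ * Real.sqrt (spectralMoment V d q) := by rw [sqrt_spectralMoment]; ring

end SpectralVariable

/-- If `R = {r₁,…,r_k}` fails to be `θ`-optimal for the upper Hessenberg matrix `H`,
i.e. `‖eₙ*(H-r₁)⋯(H-r_k)‖ > θ^k ψ_k(H)^k` where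
`ψ_k(H) = min_p ‖eₙ* p(H)‖^{1/k}` over monic `p` of degree `k`, then with
`p(z) = ∏ᵢ (z - rᵢ)`, `χ_k` the characteristic polynomial of the bottom-right `k × k`
corner of `H`, and `Z_H` the spectral random variable of `H`:
`E[|p(Z_H)|²] ≥ (θ^{2k}/κ_V(H)⁴) E[|χ_k(Z_H)|²]`. -/
theorem stmt19 {n k : ℕ} (hk1 : 1 ≤ k) (hkn : k ≤ n)
    (H V : Matrix (Fin (n + 1)) (Fin (n + 1)) ℂ) (d : Fin (n + 1) → ℂ)
    (hHess : ∀ i j : Fin (n + 1), (j : ℕ) + 1 < (i : ℕ) → H i j = 0)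
    (hV : IsUnit V) (hdiag : H = V * Matrix.diagonal d * V⁻¹)
    (κ : ℝ) (hκ1 : specNorm V = Real.sqrt κ) (hκ2 : specNorm V⁻¹ = Real.sqrt κ)
    (θ : ℝ) (hθ : 0 < θ) (r : Fin k → ℂ) (ψ : ℝ)
    (hψ : ψ = sInf {x | ∃ q : ℂ[X], q.Monic ∧ q.natDegree = k ∧
      x = rowNorm (aeval H q) ^ (1 / (k : ℝ))})
    (hfail : θ ^ k * ψ ^ k < rowNorm (aeval H (∏ i, (X - C (r i))))) :
    θ ^ (2 * k) / κ ^ 4 *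
        ∑ i, specWeight V i *
          ‖
            ((H.submatrix (cornerEmb k hkn) (cornerEmb k hkn)).charpoly).eval (d i)‖ ^ 2 ≤
      ∑ i, specWeight V i * ‖(∏ j, (X - C (r j))).eval (d i)‖ ^ 2 := by
  set χ := (H.submatrix (cornerEmb k hkn) (cornerEmb k hkn)).charpoly
  set p : ℂ[X] := ∏ j, (X - C (r j))
  have hcond : specNorm V * specNorm V⁻¹ = κ := by
    have h1 : 1 ≤ specNorm V * specNorm V⁻¹ := Matrix.one_le_l2_opNorm_mul_l2_opNorm_inv hV
    rw [hκ1, hκ2] at h1 ⊢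
    exact Real.mul_self_sqrt (Real.sqrt_pos.mp (by nlinarith [Real.sqrt_nonneg κ])).le
  have hκ : 0 < κ := by linarith [hcond ▸ Matrix.one_le_l2_opNorm_mul_l2_opNorm_inv hV]
  have hχ : Real.sqrt (spectralMoment V d χ) ≤ κ * ψ ^ k := by
    rw [show ψ = potential H k from hψ, IsUpperHessenberg.potential_pow hkn hHess hk1, ← hcond]
    exact sqrt_spectralMoment_le hV hdiag χ
  have hp : rowNorm (aeval H p) ≤ κ * Real.sqrt (spectralMoment V d p) := by
    rw [← hcond]
    exact rowNorm_aeval_le hV hdiag p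
  have key : θ ^ k * Real.sqrt (spectralMoment V d χ) ≤
      κ ^ 2 * Real.sqrt (spectralMoment V d p) := by
    linarith [mul_le_mul_of_nonneg_left hχ (pow_pos hθ k).le,
      mul_le_mul_of_nonneg_left (hfail.le.trans hp) hκ.le]
  have hsq := pow_le_pow_left₀ (by positivity) key 2
  rw [mul_pow, mul_pow, Real.sq_sqrt (spectralMoment_nonneg V d χ),
    Real.sq_sqrt (spectralMoment_nonneg V d p)] at hsq
  change θ ^ (2 * k) / κ ^ 4 * spectralMoment V d χ ≤ spectralMoment V d p
  rw [div_mul_eq_mul_div, div_le_iff₀ (by positivity)]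
  convert hsq using 1 <;> ring
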